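/- The Gupta–Sidki group Γ is infinite, and every element of Γ has finite order which is a power of 3: for every g ∈ Γ there exists k ∈ ℕ with g^(3^k) = 1. -/

import Mathlib

namespace AutSG

variable {X Q : Type*}

/-- The action of a state `q` of a Mealy automaton with transition function `δ`
and output function `out` on finite words over the alphabet `X`. -/
def mAct (δ : Q → X → Q) (out : Q → X → X) : Q → List X → List X
  | _, [] => []
  | q, x :: w => out q x :: mAct δ out (δ q x) w

theorem mAct_bijective (δ : Q → X → Q) (out : Q → X → X)
    (hout : ∀ q, Function.Bijective (out q)) (q : Q) :
    Function.Bijective (mAct δ out q) := by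
  have key : ∀ (l₁ : List X) (q : Q) (l₂ : List X),
      mAct δ out q l₁ = mAct δ out q l₂ → l₁ = l₂ := by
    intro l₁
    induction l₁ with
    | nil =>
      intro q l₂ h
      cases l₂ with
      | nil => rfl
      | cons y u => exact absurd h (by simp [mAct])
    | cons x w ih =>
      intro q l₂ h
      cases l₂ with
      | nil => exact absurd h (by simp [mAct])
      | cons y u =>
        simp only [mAct, List.cons.injEq] at h
        obtain rfl : x = y := (hout q).1 h.1
        rw [ih (δ q x) u h.2]
  have key2 : ∀ (l : List X) (q : Q), ∃ m, mAct δ out q m = l := by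
    intro l
    induction l with
    | nil => exact fun q => ⟨[], rfl⟩
    | cons y u ih =>
      intro q
      obtain ⟨x, hx⟩ := (hout q).2 y
      obtain ⟨m, hm⟩ := ih (δ q x)
      exact ⟨x :: m, by simp [mAct, hx, hm]⟩
  exact ⟨fun {l₁ l₂} h => key l₁ q l₂ h, fun l => key2 l q⟩

/-- The permutation of `X*` induced by the state `q` of an invertible Mealy automaton,
as an element of `Equiv.Perm (List X)`.  We use the convention that permutations act
on the *right* via `rApp` below, so that the Lean group multiplication `g * h`
corresponds to "first `g`, then `h`", as in the usual convention for automaton groups. -/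
noncomputable def genPerm (δ : Q → X → Q) (out : Q → X → X)
    (hout : ∀ q, Function.Bijective (out q)) (q : Q) : Equiv.Perm (List X) :=
  (Equiv.ofBijective _ (mAct_bijective δ out hout q))⁻¹

/-- Right action of a permutation on words: `rApp g w` is `w^g`.
Note `rApp (g * h) w = rApp h (rApp g w)`. -/
def rApp (g : Equiv.Perm (List X)) (w : List X) : List X := g⁻¹ w

theorem rApp_genPerm (δ : Q → X → Q) (out : Q → X → X)
    (hout : ∀ q, Function.Bijective (out q)) (q : Q) (w : List X) :
    rApp (genPerm δ out hout q) w = mAct δ out q w := by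
  simp [rApp, genPerm, Equiv.ofBijective]

/-- Commutator with the convention `[x,y] = x⁻¹y⁻¹xy`. -/
def comm {G : Type*} [Group G] (x y : G) : G := x⁻¹ * y⁻¹ * x * y

/-- Conjugation with the convention `y^z = z⁻¹yz`. -/
def conj {G : Type*} [Group G] (y z : G) : G := z⁻¹ * y * z

/-- Iterated commutators: `E₀(g,h) = g`, `E_{c+1}(g,h) = [E_c(g,h), h]`. -/
def engel {G : Type*} [Group G] : ℕ → G → G → G
  | 0, g, _ => g
  | c + 1, g, h => comm (engel c g h) h

/-- `vStar v k` is the permutation `v*k` of `X*`: it maps `v ++ w` to `v ++ w^k`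
(with respect to the right action `rApp`) and fixes every word not having `v`
as a prefix. -/
def vStar [DecidableEq X] (v : List X) (k : Equiv.Perm (List X)) :
    Equiv.Perm (List X) where
  toFun w := if v <+: w then v ++ k (w.drop v.length) else w
  invFun w := if v <+: w then v ++ k.symm (w.drop v.length) else w
  left_inv w := by
    by_cases h : v <+: w
    · simp only [if_pos h, if_pos (List.prefix_append v _), List.drop_left,
        Equiv.symm_apply_apply]
      exact List.prefix_iff_eq_append.mp h
    · simp only [if_neg h]
  right_inv w := by
    by_cases h : v <+: w
    · simp only [if_pos h, if_pos (List.prefix_append v _), List.drop_left,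
        Equiv.apply_symm_apply]
      exact List.prefix_iff_eq_append.mp h
    · simp only [if_neg h]

end AutSG
namespace AutSG

/-- States of the Gupta–Sidki automaton: `a`, `a⁻¹` (written `ai`), `t`,
and the identity state `e`. -/
inductive GSQ | a | ai | t | e
deriving DecidableEq

/-- Transition function of the Gupta–Sidki automaton (letters `1,2,3` are
`0,1,2 : Fin 3`). -/
def gsδ : GSQ → Fin 3 → GSQ
  | .t, 0 => .a
  | .t, 1 => .ai
  | .t, _ => .t
  | _, _ => .e

/-- Output: `a` is the 3-cycle `1 ↦ 2 ↦ 3 ↦ 1`, `ai` its inverse,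
the other states act trivially on letters. -/
def gsOut : GSQ → Fin 3 → Fin 3
  | .a, x => x + 1
  | .ai, x => x + 2
  | _, x => x

theorem gsOut_bij : ∀ q, Function.Bijective (gsOut q) := by
  intro q; cases q <;> decide

/-- The generator `a` of the Gupta–Sidki group: `(1w)^a = 2w`, `(2w)^a = 3w`,
`(3w)^a = 1w`. -/
noncomputable def gsa : Equiv.Perm (List (Fin 3)) := genPerm gsδ gsOut gsOut_bij .a
/-- The generator `t`: `(1w)^t = 1(w^a)`, `(2w)^t = 2(w^{a⁻¹})`, `(3w)^t = 3(w^t)`. -/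
noncomputable def gst : Equiv.Perm (List (Fin 3)) := genPerm gsδ gsOut gsOut_bij .t

/-- The Gupta–Sidki group `Γ`, as the subgroup of the permutation group of
`{1,2,3}*` generated by `a` and `t`. -/
noncomputable def GuptaSidki : Subgroup (Equiv.Perm (List (Fin 3))) :=
  Subgroup.closure {gsa, gst}

end AutSG
namespace AutSG

theorem rApp_mul (g h : Equiv.Perm (List (Fin 3))) (w : List (Fin 3)) :
    rApp (g * h) w = rApp h (rApp g w) := by
  simp [rApp, mul_inv_rev]

theorem rApp_one (w : List (Fin 3)) : rApp (1 : Equiv.Perm (List (Fin 3))) w = w := rfl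

theorem rApp_inv_rApp (g : Equiv.Perm (List (Fin 3))) (w : List (Fin 3)) :
    rApp g⁻¹ (rApp g w) = w := by simp [rApp]

theorem rApp_rApp_inv (g : Equiv.Perm (List (Fin 3))) (w : List (Fin 3)) :
    rApp g (rApp g⁻¹ w) = w := by simp [rApp]

theorem rApp_injective (g : Equiv.Perm (List (Fin 3))) :
    Function.Injective (rApp g) := fun x y h => by
  have := congrArg (rApp g⁻¹) h
  rwa [rApp_inv_rApp, rApp_inv_rApp] at this

theorem perm_eq_one_of_rApp (g : Equiv.Perm (List (Fin 3)))
    (h : ∀ w, rApp g w = w) : g = 1 := by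
  rw [← inv_eq_one]
  exact Equiv.ext h

theorem mAct_e (u : List (Fin 3)) : mAct gsδ gsOut .e u = u := by
  induction u with
  | nil => rfl
  | cons x u ih => simpa [mAct, gsδ, gsOut] using ih

theorem rApp_gsa (i : Fin 3) (u : List (Fin 3)) :
    rApp gsa (i :: u) = (i + 1) :: u := by
  rw [gsa, rApp_genPerm]
  simp [mAct, gsδ, gsOut, mAct_e]

noncomputable def gsai : Equiv.Perm (List (Fin 3)) := genPerm gsδ gsOut gsOut_bij .ai

theorem gsa_mul_gsai : gsa * gsai = 1 := by
  apply perm_eq_one_of_rApp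
  intro w
  rw [rApp_mul, gsa, gsai, rApp_genPerm, rApp_genPerm]
  cases w with
  | nil => rfl
  | cons i u => simp [mAct, gsδ, gsOut, mAct_e, add_assoc]

theorem gsai_eq : gsai = gsa⁻¹ := eq_inv_of_mul_eq_one_right gsa_mul_gsai

theorem rApp_gsa_inv (i : Fin 3) (u : List (Fin 3)) :
    rApp gsa⁻¹ (i :: u) = (i + 2) :: u := by
  rw [← gsai_eq, gsai, rApp_genPerm]
  simp [mAct, gsδ, gsOut, mAct_e]

end AutSG
namespace AutSG

/-- Letters of words representing elements of the Gupta–Sidki group. -/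
inductive Letter | A | A' | T | T'
deriving DecidableEq

/-- Formal inverse of a letter. -/
def invL : Letter → Letter
  | .A => .A' | .A' => .A | .T => .T' | .T' => .T

/-- The permutation associated to a letter. -/
noncomputable def toPerm : Letter → Equiv.Perm (List (Fin 3))
  | .A => gsa | .A' => gsa⁻¹ | .T => gst | .T' => gst⁻¹

theorem toPerm_invL (l : Letter) : toPerm (invL l) = (toPerm l)⁻¹ := by
  cases l <;> simp [invL, toPerm]

/-- Letter of the section of `t` at coordinate `i`. -/
def tsecL : Fin 3 → Letter
  | 0 => .A | 1 => .A' | 2 => .T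

theorem rApp_gst (i : Fin 3) (u : List (Fin 3)) :
    rApp gst (i :: u) = i :: rApp (toPerm (tsecL i)) u := by
  fin_cases i <;>
    · rw [gst, rApp_genPerm]
      simp [mAct, gsδ, gsOut, tsecL, toPerm]
      first
      | (rw [gsa, rApp_genPerm])
      | (rw [← gsai_eq, gsai, rApp_genPerm])
      | (rw [gst, rApp_genPerm])

theorem rApp_gst_inv (i : Fin 3) (u : List (Fin 3)) :
    rApp gst⁻¹ (i :: u) = i :: rApp (toPerm (invL (tsecL i)))  u := by
  apply rApp_injective gst
  rw [rApp_rApp_inv, rApp_gst, toPerm_invL, rApp_rApp_inv]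

theorem rApp_toPerm_nil (l : Letter) : rApp (toPerm l) [] = [] := by
  cases l
  · rw [toPerm, gsa, rApp_genPerm]; rfl
  · rw [toPerm]
    apply rApp_injective gsa
    rw [rApp_rApp_inv, gsa, rApp_genPerm]; rfl
  · rw [toPerm, gst, rApp_genPerm]; rfl
  · rw [toPerm]
    apply rApp_injective gst
    rw [rApp_rApp_inv, gst, rApp_genPerm]; rfl

/-- Evaluation of a word of letters, multiplied left to right. -/
noncomputable def eval (w : List Letter) : Equiv.Perm (List (Fin 3)) :=
  (w.map toPerm).prod

@[simp] theorem eval_nil : eval [] = 1 := rfl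

theorem eval_cons (l : Letter) (w : List Letter) :
    eval (l :: w) = toPerm l * eval w := by simp [eval]

theorem eval_append (w₁ w₂ : List Letter) :
    eval (w₁ ++ w₂) = eval w₁ * eval w₂ := by simp [eval]

theorem rApp_eval_nil (w : List Letter) : rApp (eval w) [] = [] := by
  induction w with
  | nil => rfl
  | cons l w ih => rw [eval_cons, rApp_mul, rApp_toPerm_nil, ih]

/-- Exponent-sum of the `a`-letters, in `Fin 3`; this records the action of the
evaluation on the first letter of a word. -/
def sL : Letter → Fin 3
  | .A => 1 | .A' => 2 | .T => 0 | .T' => 0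

def sw (w : List Letter) : Fin 3 := (w.map sL).sum

@[simp] theorem sw_nil : sw [] = 0 := rfl
theorem sw_cons (l : Letter) (w : List Letter) : sw (l :: w) = sL l + sw w := by
  simp [sw]
theorem sw_append (w₁ w₂ : List Letter) : sw (w₁ ++ w₂) = sw w₁ + sw w₂ := by
  simp [sw]

/-- Number of `t`-letters. -/
def tcL : Letter → ℕ
  | .A => 0 | .A' => 0 | .T => 1 | .T' => 1

def tc (w : List Letter) : ℕ := (w.map tcL).sum

@[simp] theorem tc_nil : tc [] = 0 := rfl
theorem tc_cons (l : Letter) (w : List Letter) : tc (l :: w) = tcL l + tc w := by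
  simp [tc]
theorem tc_append (w₁ w₂ : List Letter) : tc (w₁ ++ w₂) = tc w₁ + tc w₂ := by
  simp [tc]

/-- The section of (the evaluation of) a word at first letter `i`. -/
def secW : Fin 3 → List Letter → List Letter
  | _, [] => []
  | i, .A :: w => secW (i + 1) w
  | i, .A' :: w => secW (i + 2) w
  | i, .T :: w => tsecL i :: secW i w
  | i, .T' :: w => invL (tsecL i) :: secW i w

/-- The key self-similarity formula. -/
theorem key (w : List Letter) (i : Fin 3) (u : List (Fin 3)) :
    rApp (eval w) (i :: u) = (i + sw w) :: rApp (eval (secW i w)) u := by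
  induction w generalizing i u with
  | nil => simp [rApp_one, secW]
  | cons l w ih =>
    rw [eval_cons, rApp_mul, sw_cons]
    cases l
    · rw [toPerm, rApp_gsa, ih, secW, sL, add_assoc, add_comm 1 (sw w)]
    · rw [toPerm, rApp_gsa_inv, ih, secW, sL, add_assoc, add_comm 2 (sw w)]
    · rw [toPerm, rApp_gst, ih, secW, sL, zero_add, eval_cons, rApp_mul]
    · rw [toPerm, rApp_gst_inv, ih, secW, sL, zero_add, eval_cons, rApp_mul,
        toPerm_invL]

theorem secW_append (i : Fin 3) (w₁ w₂ : List Letter) :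
    secW i (w₁ ++ w₂) = secW i w₁ ++ secW (i + sw w₁) w₂ := by
  induction w₁ generalizing i with
  | nil => simp [secW]
  | cons l w ih =>
    cases l <;>
      simp [secW, sw_cons, sL, ih, add_assoc, add_comm (1 : Fin 3) (sw w),
        add_comm (2 : Fin 3) (sw w)]

end AutSG
namespace AutSG

theorem gsa_cube (u : List (Fin 3)) : rApp gsa (rApp gsa (rApp gsa u)) = u := by
  cases u with
  | nil => rw [gsa, rApp_genPerm]; rfl
  | cons i v =>
    rw [rApp_gsa, rApp_gsa, rApp_gsa]
    congr 1
    rw [add_assoc, add_assoc]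
    simp

theorem gsa_inv_cube (u : List (Fin 3)) : rApp gsa⁻¹ (rApp gsa⁻¹ (rApp gsa⁻¹ u)) = u := by
  apply rApp_injective gsa
  apply rApp_injective gsa
  apply rApp_injective gsa
  rw [rApp_rApp_inv, rApp_rApp_inv, rApp_rApp_inv]
  exact (gsa_cube u).symm

theorem gst_cube (u : List (Fin 3)) : rApp gst (rApp gst (rApp gst u)) = u := by
  induction u with
  | nil =>
    rw [gst, rApp_genPerm, rApp_genPerm, rApp_genPerm]; rfl
  | cons i v ih =>
    rw [rApp_gst, rApp_gst, rApp_gst]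
    fin_cases i
    · exact congrArg _ (gsa_cube v)
    · exact congrArg _ (gsa_inv_cube v)
    · exact congrArg _ ih

theorem gst_pow_three : gst ^ 3 = 1 := by
  apply perm_eq_one_of_rApp
  intro w
  have h3 : gst ^ 3 = gst * gst * gst := by
    rw [pow_succ, pow_succ, pow_one]
  rw [h3, rApp_mul, rApp_mul]
  exact gst_cube w

/-- A word is pure if it consists only of `t`-letters. -/
def isPure (w : List Letter) : Prop := ∀ l ∈ w, l = .T ∨ l = .T'

theorem eval_pure (w : List Letter) (h : isPure w) : ∃ k : ℤ, eval w = gst ^ k := by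
  induction w with
  | nil => exact ⟨0, rfl⟩
  | cons l w ih =>
    obtain ⟨k, hk⟩ := ih fun l hl => h l (List.mem_cons_of_mem _ hl)
    rcases h l (List.mem_cons_self (a := l) (l := w)) with rfl | rfl
    · exact ⟨1 + k, by rw [eval_cons, hk, toPerm, zpow_add, zpow_one]⟩
    · exact ⟨-1 + k, by rw [eval_cons, hk, toPerm, zpow_add, zpow_neg_one]⟩

theorem pure_pow_three (w : List Letter) (h : isPure w) : eval w ^ 3 = 1 := by
  obtain ⟨k, hk⟩ := eval_pure w h
  rw [hk, ← zpow_natCast, ← zpow_mul, mul_comm, zpow_mul, zpow_natCast,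
    gst_pow_three, one_zpow]

theorem tc_secW_le (w : List Letter) (i : Fin 3) : tc (secW i w) ≤ tc w := by
  induction w generalizing i with
  | nil => simp [secW]
  | cons l w ih =>
    cases l
    · rw [secW, tc_cons]; exact (ih _).trans (Nat.le_add_left _ _)
    · rw [secW, tc_cons]; exact (ih _).trans (Nat.le_add_left _ _)
    · rw [secW, tc_cons, tc_cons]
      exact Nat.add_le_add (by cases (tsecL i) <;> simp [tcL]) (ih i)
    · rw [secW, tc_cons, tc_cons]
      exact Nat.add_le_add (by cases (invL (tsecL i)) <;> simp [tcL]) (ih i)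

theorem dich (w : List Letter) (i : Fin 3) :
    isPure (secW i w) ∨ tc (secW i w) < tc w := by
  induction w generalizing i with
  | nil => exact Or.inl (by simp [secW, isPure])
  | cons l w ih =>
    cases l
    · rw [secW, tc_cons]
      have h0 : tcL Letter.A = 0 := rfl
      exact (ih (i + 1)).imp id (by omega)
    · rw [secW, tc_cons]
      have h0 : tcL Letter.A' = 0 := rfl
      exact (ih (i + 2)).imp id (by omega)
    · rw [secW, tc_cons]
      have h0 : tcL Letter.T = 1 := rfl
      by_cases h2 : i = 2
      · subst h2
        rcases ih 2 with hp | hlt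
        · exact Or.inl fun l hl => by
            rcases List.mem_cons.mp hl with rfl | hl
            · exact Or.inl rfl
            · exact hp l hl
        · right
          have hts : tcL (tsecL 2) = 1 := rfl
          rw [tc_cons]; omega
      · right
        have hle := tc_secW_le w i
        have : tcL (tsecL i) = 0 := by fin_cases i <;> simp_all [tsecL, tcL]
        rw [tc_cons, this]; omega
    · rw [secW, tc_cons]
      have h0 : tcL Letter.T' = 1 := rfl
      by_cases h2 : i = 2
      · subst h2
        rcases ih 2 with hp | hlt
        · exact Or.inl fun l hl => by
            rcases List.mem_cons.mp hl with rfl | hl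
            · exact Or.inr rfl
            · exact hp l hl
        · right
          have hts : tcL (invL (tsecL 2)) = 1 := rfl
          rw [tc_cons]; omega
      · right
        have hle := tc_secW_le w i
        have : tcL (invL (tsecL i)) = 0 := by fin_cases i <;> simp_all [tsecL, invL, tcL]
        rw [tc_cons, this]; omega

open Fin.CommRing in
theorem sw_secW_sum (w : List Letter) (i : Fin 3) :
    sw (secW i w) + sw (secW (i + 1) w) + sw (secW (i + 2) w) = 0 := by
  induction w generalizing i with
  | nil => simp [secW]
  | cons l w ih =>
    cases l
    · have h1 : i + 1 + 1 = i + 2 := by ring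
      have h2 : i + 2 + 1 = i + 1 + 2 := by ring
      have h := ih (i + 1)
      rw [h1] at h
      rw [secW, secW, secW, h1, h2]
      linear_combination h
    · have h1 : i + 1 + 2 = i + 2 + 1 := by ring
      rw [secW, secW, secW, h1]
      linear_combination ih (i + 2)
    · have haux : ∀ j : Fin 3, sL (tsecL j) + sL (tsecL (j + 1)) + sL (tsecL (j + 2)) = 0 := by
        decide
      rw [secW, secW, secW, sw_cons, sw_cons, sw_cons]
      linear_combination ih i + haux i
    · have haux : ∀ j : Fin 3,
          sL (invL (tsecL j)) + sL (invL (tsecL (j + 1))) + sL (invL (tsecL (j + 2))) = 0 := by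
        decide
      rw [secW, secW, secW, sw_cons, sw_cons, sw_cons]
      linear_combination ih i + haux i

open Fin.CommRing in
theorem tc_secW_sum (w : List Letter) (i : Fin 3) :
    tc (secW i w) + tc (secW (i + 1) w) + tc (secW (i + 2) w) = tc w := by
  induction w generalizing i with
  | nil => simp [secW]
  | cons l w ih =>
    cases l
    · have h1 : i + 1 + 1 = i + 2 := by ring
      have h2 : i + 2 + 1 = i + 1 + 2 := by ring
      have h := ih (i + 1)
      rw [h1] at h
      have h0 : tcL Letter.A = 0 := rfl
      rw [secW, secW, secW, h1, h2, tc_cons, h0]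
      omega
    · have h1 : i + 1 + 2 = i + 2 + 1 := by ring
      have h := ih (i + 2)
      have h0 : tcL Letter.A' = 0 := rfl
      rw [secW, secW, secW, h1, tc_cons, h0]
      omega
    · have haux := (by decide :
        ∀ j : Fin 3, tcL (tsecL j) + tcL (tsecL (j + 1)) + tcL (tsecL (j + 2)) = 1) i
      have h := ih i
      have h0 : tcL Letter.T = 1 := rfl
      rw [secW, secW, secW, tc_cons, tc_cons, tc_cons, tc_cons, h0]
      omega
    · have haux := (by decide :
        ∀ j : Fin 3, tcL (invL (tsecL j)) + tcL (invL (tsecL (j + 1)))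
          + tcL (invL (tsecL (j + 2))) = 1) i
      have h := ih i
      have h0 : tcL Letter.T' = 1 := rfl
      rw [secW, secW, secW, tc_cons, tc_cons, tc_cons, tc_cons, h0]
      omega

end AutSG
namespace AutSG

theorem rApp_pow_fix (g : Equiv.Perm (List (Fin 3))) (f : Fin 3 → Equiv.Perm (List (Fin 3)))
    (hfix : ∀ i u, rApp g (i :: u) = i :: rApp (f i) u) (m : ℕ) (i : Fin 3)
    (u : List (Fin 3)) : rApp (g ^ m) (i :: u) = i :: rApp (f i ^ m) u := by
  induction m with
  | zero => simp [rApp_one]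
  | succ m ih =>
    rw [pow_succ, rApp_mul, ih, hfix, pow_succ, rApp_mul]

theorem rApp_pow_nil (g : Equiv.Perm (List (Fin 3))) (h : rApp g [] = []) (m : ℕ) :
    rApp (g ^ m) [] = [] := by
  induction m with
  | zero => simp [rApp_one]
  | succ m ih => rw [pow_succ, rApp_mul, ih, h]

theorem eval_pow_eq_one (w : List Letter) (m : ℕ) (h0 : sw w = 0)
    (hsec : ∀ i, eval (secW i w) ^ m = 1) : eval w ^ m = 1 := by
  apply perm_eq_one_of_rApp
  intro u
  cases u with
  | nil => exact rApp_pow_nil _ (rApp_eval_nil w) m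
  | cons i v =>
    rw [rApp_pow_fix (eval w) (fun i => eval (secW i w))
      (fun i u => by rw [key, h0, add_zero]), hsec, rApp_one]

theorem pow3_mono (g : Equiv.Perm (List (Fin 3))) (k K : ℕ) (hk : k ≤ K)
    (h : g ^ 3 ^ k = 1) : g ^ 3 ^ K = 1 := by
  have h3 : (3 : ℕ) ^ K = 3 ^ k * 3 ^ (K - k) := by
    rw [← pow_add]; congr 1; omega
  rw [h3, pow_mul, h, one_pow]

theorem zcase (w : List Letter) (h0 : sw w = 0)
    (IH : ∀ v, tc v < tc w → ∃ k, eval v ^ 3 ^ k = 1) : ∃ k, eval w ^ 3 ^ k = 1 := by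
  have hsec : ∀ i : Fin 3, ∃ k, eval (secW i w) ^ 3 ^ k = 1 := by
    intro i
    rcases dich w i with hp | hlt
    · exact ⟨1, by rw [pow_one]; exact pure_pow_three _ hp⟩
    · exact IH _ hlt
  obtain ⟨k0, hk0⟩ := hsec 0
  obtain ⟨k1, hk1⟩ := hsec 1
  obtain ⟨k2, hk2⟩ := hsec 2
  refine ⟨max k0 (max k1 k2), eval_pow_eq_one w _ h0 fun i => ?_⟩
  fin_cases i
  · exact pow3_mono _ _ _ (by omega) hk0
  · exact pow3_mono _ _ _ (by omega) hk1
  · exact pow3_mono _ _ _ (by omega) hk2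

theorem conj_pow_eq {G : Type*} [Group G] (c x : G) (m : ℕ) :
    (c⁻¹ * x * c) ^ m = c⁻¹ * x ^ m * c := by
  induction m with
  | zero => simp
  | succ m ih => rw [pow_succ, ih, pow_succ]; group

open Fin.CommRing in
theorem torsion_step (w : List Letter)
    (IH : ∀ v, tc v < tc w → ∃ k, eval v ^ 3 ^ k = 1) : ∃ k, eval w ^ 3 ^ k = 1 := by
  by_cases h0 : sw w = 0
  · exact zcase w h0 IH
  · have hj12 : sw w = 1 ∨ sw w = 2 := by
      rcases (by decide : ∀ j : Fin 3, j = 0 ∨ j = 1 ∨ j = 2) (sw w) with h | h | h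
      · exact absurd h h0
      · exact Or.inl h
      · exact Or.inr h
    -- decomposition of sections of w ++ (w ++ w)
    have hsecdec : ∀ r : Fin 3, secW r (w ++ (w ++ w)) =
        secW r w ++ (secW (r + sw w) w ++ secW (r + sw w + sw w) w) := by
      intro r
      rw [secW_append, secW_append]
    have hsw3 : sw (w ++ (w ++ w)) = 0 := by
      rw [sw_append, sw_append]
      exact (by decide : ∀ j : Fin 3, j + (j + j) = 0) (sw w)
    have f01 : (0 : Fin 3) + 1 = 1 := by decide
    have f11 : (1 : Fin 3) + 1 = 2 := by decide
    have f21 : (2 : Fin 3) + 1 = 0 := by decide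
    have f02 : (0 : Fin 3) + 2 = 2 := by decide
    have f12 : (1 : Fin 3) + 2 = 0 := by decide
    have f22 : (2 : Fin 3) + 2 = 1 := by decide
    set W := secW 0 (w ++ (w ++ w)) with hWdef
    have hWtc : tc W = tc w := by
      have hsum := tc_secW_sum w 0
      rw [f01] at hsum
      rcases hj12 with h | h <;>
      · rw [hWdef, hsecdec 0, h, tc_append, tc_append]
        simp only [f01, f11, f21, f02, f12, f22, zero_add] at hsum ⊢
        omega
    have hWs : sw W = 0 := by
      have hsum := sw_secW_sum w 0
      rw [f01] at hsum
      rcases hj12 with h | h <;>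
      · rw [hWdef, hsecdec 0, h, sw_append, sw_append]
        simp only [f01, f11, f21, f02, f12, f22, zero_add] at hsum ⊢
        linear_combination hsum
    obtain ⟨k, hk⟩ := zcase W hWs fun v hv => IH v (by rw [hWtc] at hv; exact hv)
    have hsecpow : ∀ i : Fin 3, eval (secW i (w ++ (w ++ w))) ^ 3 ^ k = 1 := by
      have hconj : ∀ i : Fin 3, ∃ c, eval (secW i (w ++ (w ++ w))) = c⁻¹ * eval W * c := by
        intro i
        have hW : eval W = eval (secW 0 w) *
            (eval (secW (0 + sw w) w) * eval (secW (0 + sw w + sw w) w)) := by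
          rw [hWdef, hsecdec 0, eval_append, eval_append]
        have hi : eval (secW i (w ++ (w ++ w))) = eval (secW i w) *
            (eval (secW (i + sw w) w) * eval (secW (i + sw w + sw w) w)) := by
          rw [hsecdec i, eval_append, eval_append]
        have hicase := (by decide : ∀ j : Fin 3, j = 0 ∨ j = 1 ∨ j = 2) i
        rcases hj12 with h | h <;> rw [h] at hW hi <;>
          rcases hicase with rfl | rfl | rfl <;>
          simp only [f01, f11, f21, f02, f12, f22, zero_add] at hW hi <;>
          rw [hW] <;> (try rw [hi])
        · exact ⟨1, by group⟩
        · exact ⟨eval (secW 0 w), by group⟩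
        · exact ⟨eval (secW 0 w) * eval (secW 1 w), by group⟩
        · exact ⟨1, by group⟩
        · exact ⟨eval (secW 0 w) * eval (secW 2 w), by group⟩
        · exact ⟨eval (secW 0 w), by group⟩
      intro i
      obtain ⟨c, hc⟩ := hconj i
      rw [hc, conj_pow_eq, hk, mul_one, inv_mul_cancel]
    have hcube : eval (w ++ (w ++ w)) ^ 3 ^ k = 1 :=
      eval_pow_eq_one _ _ hsw3 hsecpow
    refine ⟨k + 1, ?_⟩
    have : eval w ^ 3 ^ (k + 1) = eval (w ++ (w ++ w)) ^ 3 ^ k := by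
      rw [eval_append, eval_append, pow_succ', pow_mul]
      congr 1
    rw [this, hcube]

theorem torsion_word (w : List Letter) : ∃ k, eval w ^ 3 ^ k = 1 := by
  suffices H : ∀ n w, tc w ≤ n → ∃ k, eval w ^ 3 ^ k = 1 from H (tc w) w le_rfl
  intro n
  induction n with
  | zero => exact fun w hw => torsion_step w fun v hv => absurd hv (by omega)
  | succ n ih => exact fun w hw => torsion_step w fun v hv => ih v (by omega)

end AutSG
namespace AutSG

theorem toPerm_mem (l : Letter) : toPerm l ∈ GuptaSidki := by
  have ha : gsa ∈ GuptaSidki := Subgroup.subset_closure (by simp)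
  have ht : gst ∈ GuptaSidki := Subgroup.subset_closure (by simp)
  cases l
  · exact ha
  · exact inv_mem ha
  · exact ht
  · exact inv_mem ht

theorem eval_mem (w : List Letter) : eval w ∈ GuptaSidki := by
  refine Subgroup.list_prod_mem _ fun x hx => ?_
  obtain ⟨l, _, rfl⟩ := List.mem_map.mp hx
  exact toPerm_mem l

/-- Formal inverse of a word. -/
def winv (w : List Letter) : List Letter := (w.reverse).map invL

theorem eval_winv (w : List Letter) : eval (winv w) = (eval w)⁻¹ := by
  induction w with
  | nil => simp [winv]
  | cons l w ih =>
    have : winv (l :: w) = winv w ++ [invL l] := by simp [winv]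
    rw [this, eval_append, ih, eval_cons, eval_cons, eval_nil, mul_one,
      toPerm_invL, mul_inv_rev]

theorem eval_surj (g : Equiv.Perm (List (Fin 3))) (hg : g ∈ GuptaSidki) :
    ∃ w : List Letter, eval w = g := by
  induction hg using Subgroup.closure_induction with
  | mem x hx =>
    rcases hx with rfl | rfl
    · exact ⟨[.A], by rw [eval_cons, eval_nil, mul_one]; rfl⟩
    · exact ⟨[.T], by rw [eval_cons, eval_nil, mul_one]; rfl⟩
  | one => exact ⟨[], rfl⟩
  | mul x y _ _ hx hy =>
    obtain ⟨wx, rfl⟩ := hx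
    obtain ⟨wy, rfl⟩ := hy
    exact ⟨wx ++ wy, eval_append _ _⟩
  | inv x _ hx =>
    obtain ⟨wx, rfl⟩ := hx
    exact ⟨winv wx, eval_winv _⟩

/-- Lift of a word into the subtree below the letter `0`. -/
def liftL : Letter → List Letter
  | .A => [.T]
  | .A' => [.T']
  | .T => [.A', .T, .A]
  | .T' => [.A', .T', .A]

def liftW (w : List Letter) : List Letter := w.flatMap liftL

theorem rApp_liftL (l : Letter) (u : List (Fin 3)) :
    rApp (eval (liftL l)) ((0 : Fin 3) :: u) = (0 : Fin 3) :: rApp (toPerm l) u := by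
  have h02 : (0 : Fin 3) + 2 = 2 := by decide
  have h21 : (2 : Fin 3) + 1 = 0 := by decide
  have ht2 : toPerm (tsecL 2) = gst := rfl
  have ht2' : toPerm (invL (tsecL 2)) = gst⁻¹ := by
    rw [toPerm_invL, ht2]
  have ht0 : toPerm (tsecL 0) = gsa := rfl
  have ht0' : toPerm (invL (tsecL 0)) = gsa⁻¹ := by
    rw [toPerm_invL, ht0]
  cases l
  · simp only [liftL, eval_cons, eval_nil, mul_one, toPerm]
    rw [rApp_gst, ht0]
  · simp only [liftL, eval_cons, eval_nil, mul_one, toPerm]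
    rw [rApp_gst_inv, ht0']
  · simp only [liftL, eval_cons, eval_nil, mul_one, rApp_mul, toPerm]
    rw [rApp_gsa_inv, h02, rApp_gst, ht2, rApp_gsa, h21]
  · simp only [liftL, eval_cons, eval_nil, mul_one, rApp_mul, toPerm]
    rw [rApp_gsa_inv, h02, rApp_gst_inv, ht2', rApp_gsa, h21]

theorem rApp_liftW (w : List Letter) (u : List (Fin 3)) :
    rApp (eval (liftW w)) ((0 : Fin 3) :: u) = (0 : Fin 3) :: rApp (eval w) u := by
  induction w generalizing u with
  | nil => simp [liftW, rApp_one]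
  | cons l w ih =>
    have : liftW (l :: w) = liftL l ++ liftW w := by simp [liftW]
    rw [this, eval_append, rApp_mul, rApp_liftL, ih, eval_cons, rApp_mul]

open Fin.CommRing in
theorem rApp_repA (k : ℕ) (i : Fin 3) (u : List (Fin 3)) :
    rApp (eval (List.replicate k .A)) (i :: u) = (i + (k : Fin 3)) :: u := by
  induction k generalizing i with
  | zero => simp [rApp_one]
  | succ k ih =>
    simp only [List.replicate_succ, eval_cons, rApp_mul, toPerm]
    rw [rApp_gsa, ih]
    congr 1
    push_cast
    ring

open Fin.CommRing in
/-- Spherical transitivity: every word is reachable from `0^n`. -/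
theorem reach (v : List (Fin 3)) :
    ∃ w : List Letter, rApp (eval w) (List.replicate v.length 0) = v := by
  induction v with
  | nil => exact ⟨[], rfl⟩
  | cons x v ih =>
    obtain ⟨w, hw⟩ := ih
    refine ⟨liftW w ++ List.replicate x.val .A, ?_⟩
    rw [eval_append, rApp_mul, List.length_cons, List.replicate_succ, rApp_liftW, hw,
      rApp_repA, zero_add, Fin.cast_val_eq_self]

end AutSG
open AutSG in
/-- The Gupta–Sidki group `Γ` is infinite, and every element of `Γ` has finite
order a power of `3`. -/
theorem guptasidki_infinite_and_three_torsion :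
    Infinite GuptaSidki ∧ ∀ g ∈ GuptaSidki, ∃ k : ℕ, g ^ (3 ^ k) = 1 := by
  constructor
  · by_contra hfin
    rw [not_infinite_iff_finite] at hfin
    have : Fintype ↥GuptaSidki := Fintype.ofFinite _
    set n := Fintype.card ↥GuptaSidki with hn
    have hF : ∀ f : Fin n → Fin 3, ∃ g : ↥GuptaSidki,
        rApp (g : Equiv.Perm (List (Fin 3))) (List.replicate n 0) = List.ofFn f := by
      intro f
      obtain ⟨w, hw⟩ := reach (List.ofFn f)
      rw [List.length_ofFn] at hw
      exact ⟨⟨eval w, eval_mem w⟩, hw⟩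
    choose F hFspec using hF
    have hinj : Function.Injective F := by
      intro f g hfg
      have := hFspec f
      rw [hfg, hFspec g] at this
      exact (List.ofFn_inj.mp this).symm
    have hcard := Fintype.card_le_of_injective F hinj
    rw [Fintype.card_fun, Fintype.card_fin, Fintype.card_fin, ← hn] at hcard
    have := Nat.lt_pow_self (n := n) (by norm_num : 1 < 3)
    omega
  · intro g hg
    obtain ⟨w, rfl⟩ := eval_surj g hg
    exact torsion_word w
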